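/- arXiv:2210.10259 — 5 statements merged into one kernel-verified Lean document; each statement's English description precedes it below -/
import Mathlib

section
/- If G = (V,A) is an acyclic digraph, then |A| ≤ p_#(G) * (|V| - 1), where p_#(G) = (1/2) * sum over vertices v of |d^+(v) - d^-(v)|. -/
open scoped Classical

variable {V : Type*}

/-- Outdegree of `v` in the digraph with arc set `A`. -/
noncomputable def outdeg (A : Finset (V × V)) (v : V) : ℕ :=
  (A.filter (fun a => a.1 = v)).card

/-- Indegree of `v` in the digraph with arc set `A`. -/
noncomputable def indeg (A : Finset (V × V)) (v : V) : ℕ :=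
  (A.filter (fun a => a.2 = v)).card

/-- `p_#(G) = (1/2) ∑_v |d⁺(v) - d⁻(v)|`. -/
noncomputable def pSharp [Fintype V] (A : Finset (V × V)) : ℕ :=
  (∑ v, ((outdeg A v : ℤ) - (indeg A v : ℤ)).natAbs) / 2

/-- A (simple) directed path, given as its list of vertices. -/
def IsDipath (A : Finset (V × V)) (l : List V) : Prop :=
  l ≠ [] ∧ l.Nodup ∧ l.Chain' (fun u v => (u, v) ∈ A)

/-- The arc set of a directed path given by its vertex list. -/
noncomputable def pathArcs (l : List V) : Finset (V × V) :=
  (l.zip l.tail).toFinset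

/-- A (simple) directed cycle, given as its list of vertices (the closing
arc from the last vertex back to the first is implicit). -/
def IsDicycle (A : Finset (V × V)) (l : List V) : Prop :=
  2 ≤ l.length ∧ l.Nodup ∧ (l ++ l.take 1).Chain' (fun u v => (u, v) ∈ A)

/-- The arc set of a directed cycle given by its vertex list. -/
noncomputable def cycleArcs (l : List V) : Finset (V × V) :=
  pathArcs (l ++ l.take 1)

/-- A digraph is loopless (simple). -/
def Loopless (A : Finset (V × V)) : Prop := ∀ a ∈ A, a.1 ≠ a.2

/-- A digraph is acyclic if it contains no directed cycle. -/
def Acyclic (A : Finset (V × V)) : Prop := ∀ l : List V, ¬ IsDicycle A l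

/-- Strong connectivity: every vertex reaches every other by a directed walk. -/
def StrongConn (A : Finset (V × V)) : Prop :=
  ∀ u v : V, Relation.ReflTransGen (fun x y => (x, y) ∈ A) u v

/-- A connected Eulerian digraph: strongly connected with balanced degrees. -/
def ConnEuler [Fintype V] (A : Finset (V × V)) : Prop :=
  StrongConn A ∧ ∀ v : V, outdeg A v = indeg A v

/-- Minimally Eulerian: connected Eulerian, and removing the arcs of any
directed cycle disconnects the digraph. -/
def MinEuler [Fintype V] (A : Finset (V × V)) : Prop :=
  ConnEuler A ∧ ∀ l : List V, IsDicycle A l → ¬ StrongConn (A \ cycleArcs l)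

/-- A directed path from `u` to `v`. -/
def IsDipathFrom (A : Finset (V × V)) (u v : V) (l : List V) : Prop :=
  IsDipath A l ∧ l.head? = some u ∧ l.getLast? = some v

/-- The adjacency relation of the `k`-th power: an arc `u → v` whenever
there is a directed path of length at most `k` from `u` to `v`. -/
def powRel (A : Finset (V × V)) (k : ℕ) (u v : V) : Prop :=
  u ≠ v ∧ ∃ l : List V, IsDipathFrom A u v l ∧ l.length ≤ k + 1

/-- Hamiltonicity of (the digraph given by) a relation `R`. -/
def IsHamiltonian (R : V → V → Prop) : Prop :=
  ∃ l : List V, l.Nodup ∧ (∀ v : V, v ∈ l) ∧ 2 ≤ l.length ∧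
    (l ++ l.take 1).Chain' R


lemma map_fst_zip_tail : ∀ (l : List V), (l.zip l.tail).map Prod.fst = l.dropLast
  | [] => rfl
  | [a] => rfl
  | a :: b :: t => by
    rw [List.dropLast_cons₂]
    simp only [List.tail_cons, List.zip_cons_cons, List.map_cons]
    rw [← map_fst_zip_tail (b :: t)]
    simp

lemma map_snd_zip_tail (l : List V) : (l.zip l.tail).map Prod.snd = l.tail :=
  List.map_snd_zip (by cases l <;> simp)

lemma chain'_zip_mem {R : V → V → Prop} :
    ∀ {l : List V}, l.Chain' R → ∀ p ∈ l.zip l.tail, R p.1 p.2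
  | [], _, p, hp => by simp at hp
  | [a], _, p, hp => by simp at hp
  | a :: b :: t, h, p, hp => by
    simp only [List.Chain', List.isChain_cons_cons] at h
    simp only [List.tail_cons, List.zip_cons_cons, List.mem_cons] at hp
    rcases hp with rfl | hp
    · exact h.1
    · exact chain'_zip_mem h.2 p hp

lemma card_filter_toFinset {α β : Type*} (z : List α) (f : α → β) (hz : (z.map f).Nodup) (v : β) :
    ((z.toFinset).filter (fun a => f a = v)).card = if v ∈ z.map f then 1 else 0 := by
  by_cases hmem : v ∈ z.map f
  · rw [if_pos hmem]
    obtain ⟨a, ha, rfl⟩ := List.mem_map.1 hmem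
    refine le_antisymm (Finset.card_le_one.2 ?_) (Finset.one_le_card.2 ⟨a, ?_⟩)
    · intro x hx y hy
      simp only [Finset.mem_filter, List.mem_toFinset] at hx hy
      exact List.inj_on_of_nodup_map hz hx.1 hy.1 (hx.2.trans hy.2.symm)
    · simp [List.mem_toFinset.2 ha]
  · rw [if_neg hmem, Finset.card_eq_zero, Finset.filter_eq_empty_iff]
    intro x hx
    simp only [List.mem_toFinset] at hx
    exact fun h => hmem (h ▸ List.mem_map_of_mem (f := f) hx)

lemma exists_maximal_path [Fintype V] (A : Finset (V × V)) (hA : Loopless A)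
    (hac : Acyclic A) (hne : A.Nonempty) :
    ∃ (x y : V) (r : List V),
      (x :: y :: r).Nodup ∧ (x :: y :: r).Chain' (fun u v => (u, v) ∈ A) ∧
      indeg A x = 0 ∧ outdeg A ((x :: y :: r).getLast (by simp)) = 0 := by
  set R : V → V → Prop := fun u v => (u, v) ∈ A with hR
  set Q : ℕ → Prop := fun n => ∃ l : List V, l.Nodup ∧ l.Chain' R ∧ l.length = n with hQdef
  obtain ⟨a, ha⟩ := hne
  have hnd2 : ([a.1, a.2] : List V).Nodup := by simp [hA a ha]
  have hQ2 : Q 2 := ⟨[a.1, a.2], hnd2, by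
    simp only [List.Chain', List.isChain_cons_cons, List.isChain_singleton, and_true, hR]; exact ha, rfl⟩
  have h2N : 2 ≤ Fintype.card V := by simpa using hnd2.length_le_card
  set m := Nat.findGreatest Q (Fintype.card V) with hm
  obtain ⟨l, hnd, hch, hlenm⟩ : Q m := Nat.findGreatest_spec h2N hQ2
  have hmax : ∀ l' : List V, l'.Nodup → l'.Chain' R → l'.length ≤ m := fun l' h1 h2 =>
    Nat.le_findGreatest h1.length_le_card ⟨l', h1, h2, rfl⟩
  have h2m : 2 ≤ m := Nat.le_findGreatest h2N hQ2
  obtain ⟨x, y, r, rfl⟩ : ∃ x y r, l = x :: y :: r := by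
    rcases l with _ | ⟨x, _ | ⟨y, r⟩⟩
    · simp at hlenm; omega
    · simp at hlenm; omega
    · exact ⟨x, y, r, rfl⟩
  set l : List V := x :: y :: r with hl
  refine ⟨x, y, r, hnd, hch, ?_, ?_⟩
  · -- indeg A x = 0
    by_contra h0
    rw [indeg] at h0
    obtain ⟨p, hp⟩ : (A.filter (fun a => a.2 = x)).Nonempty :=
      Finset.card_pos.1 (Nat.pos_of_ne_zero h0)
    rw [Finset.mem_filter] at hp
    have hu : (p.1, x) ∈ A := by
      have := hp.1; rwa [show p = (p.1, p.2) from rfl, hp.2] at this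
    set u := p.1 with hudef
    by_cases hul : u ∈ l
    · -- build a cycle
      set i := l.idxOf u with hi
      have hil : i < l.length := List.idxOf_lt_length_iff.2 hul
      have hgi : l[i] = u := List.getElem_idxOf hil
      have hux : u ≠ x := hA (u, x) hu
      have hi1 : 1 ≤ i := by
        rcases Nat.eq_zero_or_pos i with h | h
        · exact absurd (by rw [← hgi]; simp [h, hl]) hux
        · exact h
      set c := l.take (i + 1) with hc
      have hclen : c.length = i + 1 := by
        simp only [hc, List.length_take]; omega
      have hlastc : c.getLast? = some u := by
        rw [List.getLast?_eq_getElem?, hclen]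
        simp only [hc, Nat.add_sub_cancel, List.getElem?_take, Nat.lt_succ_self, if_true]
        simp [List.getElem?_eq_getElem hil, hgi]
      have hctake : c.take 1 = [x] := by
        simp [hc, hl, List.take_take]
      exact hac c ⟨by omega, (List.take_sublist _ _).nodup hnd, by
        simp only [List.Chain']
        rw [hctake, List.isChain_append]
        refine ⟨List.IsChain.take hch _, List.isChain_singleton _, ?_⟩
        intro a' ha' b' hb'
        rw [hlastc, Option.mem_some_iff] at ha'
        simp only [List.head?_cons, Option.mem_some_iff] at hb'
        subst ha'; subst hb'; exact hu⟩
    · -- extend the path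
      have : (u :: l).length ≤ m := hmax _ (by simp [hnd, hul]) (List.isChain_cons_cons.2 ⟨hu, hch⟩)
      simp only [List.length_cons] at this
      omega
  · -- outdeg at the last vertex = 0
    set t := l.getLast (by simp [hl]) with ht
    have hlastl : l.getLast? = some t := List.getLast?_eq_getLast _
    by_contra h0
    rw [outdeg] at h0
    obtain ⟨p, hp⟩ : (A.filter (fun a => a.1 = t)).Nonempty :=
      Finset.card_pos.1 (Nat.pos_of_ne_zero h0)
    rw [Finset.mem_filter] at hp
    have hw : (t, p.2) ∈ A := by
      have := hp.1; rwa [show p = (p.1, p.2) from rfl, hp.2] at this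
    set w := p.2 with hwdef
    have htw : t ≠ w := hA (t, w) hw
    by_cases hwl : w ∈ l
    · -- build a cycle
      set j := l.idxOf w with hj
      have hjl : j < l.length := List.idxOf_lt_length_iff.2 hwl
      have hgj : l[j] = w := List.getElem_idxOf hjl
      set c := l.drop j with hc
      have hclen : c.length = l.length - j := by simp [hc]
      have hheadc : c.head? = some w := by
        rw [hc, List.head?_drop, List.getElem?_eq_getElem hjl, hgj]
      have hlastc : c.getLast? = some t := by
        rw [List.getLast?_eq_getElem?, hclen, hc, List.getElem?_drop]
        have : j + (l.length - j - 1) = l.length - 1 := by omega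
        rw [this, ← List.getLast?_eq_getElem?, hlastl]
      have hc2 : 2 ≤ c.length := by
        rcases Nat.lt_or_ge c.length 2 with h | h
        · exfalso
          interval_cases hcl : c.length
          · rw [List.length_eq_zero_iff] at hcl; rw [hcl] at hheadc; simp at hheadc
          · obtain ⟨e, he⟩ := List.length_eq_one_iff.1 hcl
            rw [he] at hheadc hlastc
            simp at hheadc hlastc
            exact htw (hlastc.symm.trans hheadc)
        · exact h
      obtain ⟨c', hc'⟩ : ∃ c', c = w :: c' := by
        rcases hcc : c with _ | ⟨e, c'⟩
        · rw [hcc] at hheadc; simp at hheadc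
        · rw [hcc] at hheadc; simp at hheadc; exact ⟨c', by rw [hheadc]⟩
      exact hac c ⟨hc2, (List.drop_sublist _ _).nodup hnd, by
        have hctake : c.take 1 = [w] := by rw [hc']; rfl
        simp only [List.Chain']
        rw [hctake, List.isChain_append]
        refine ⟨List.IsChain.drop hch _, List.isChain_singleton _, ?_⟩
        intro a' ha' b' hb'
        rw [hlastc, Option.mem_some_iff] at ha'
        simp only [List.head?_cons, Option.mem_some_iff] at hb'
        subst ha'; subst hb'; exact hw⟩
    · -- extend the path
      have hnd' : (l ++ [w]).Nodup := by
        rw [List.nodup_append]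
        refine ⟨hnd, List.nodup_singleton _, ?_⟩
        intro b hb b' hb'
        simp only [List.mem_singleton] at hb'
        exact fun h => hwl (by rw [← hb', ← h]; exact hb)
      have hch' : (l ++ [w]).Chain' R := by
        simp only [List.Chain']
        rw [List.isChain_append]
        refine ⟨hch, List.isChain_singleton _, ?_⟩
        intro a' ha' b' hb'
        rw [hlastl, Option.mem_some_iff] at ha'
        simp only [List.head?_cons, Option.mem_some_iff] at hb'
        subst ha'; subst hb'; exact hw
      have : (l ++ [w]).length ≤ m := hmax _ hnd' hch'
      simp only [List.length_append, List.length_cons, List.length_nil] at this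
      omega

lemma outdeg_sdiff_eq (A P : Finset (V × V)) (hP : P ⊆ A) (v : V) :
    (outdeg (A \ P) v : ℤ) = outdeg A v - outdeg P v := by
  have hsub : (A \ P).filter (fun a => a.1 = v)
      = A.filter (fun a => a.1 = v) \ P.filter (fun a => a.1 = v) := by
    ext a; simp only [Finset.mem_filter, Finset.mem_sdiff]; tauto
  have hle : P.filter (fun a => a.1 = v) ⊆ A.filter (fun a => a.1 = v) :=
    Finset.filter_subset_filter _ hP
  rw [outdeg, outdeg, outdeg, hsub, Finset.card_sdiff_of_subset hle,
    Nat.cast_sub (Finset.card_le_card hle)]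

lemma indeg_sdiff_eq (A P : Finset (V × V)) (hP : P ⊆ A) (v : V) :
    (indeg (A \ P) v : ℤ) = indeg A v - indeg P v := by
  have hsub : (A \ P).filter (fun a => a.2 = v)
      = A.filter (fun a => a.2 = v) \ P.filter (fun a => a.2 = v) := by
    ext a; simp only [Finset.mem_filter, Finset.mem_sdiff]; tauto
  have hle : P.filter (fun a => a.2 = v) ⊆ A.filter (fun a => a.2 = v) :=
    Finset.filter_subset_filter _ hP
  rw [indeg, indeg, indeg, hsub, Finset.card_sdiff_of_subset hle,
    Nat.cast_sub (Finset.card_le_card hle)]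

lemma stmt2_aux [Fintype V] :
    ∀ (n : ℕ) (A : Finset (V × V)), A.card ≤ n → Loopless A → Acyclic A →
      A.card ≤ pSharp A * (Fintype.card V - 1) := by
  intro n
  induction n with
  | zero =>
    intro A h _ _
    have : A.card = 0 := Nat.le_zero.1 h
    rw [this]; exact Nat.zero_le _
  | succ n ih =>
    intro A hcard hA hac
    rcases A.eq_empty_or_nonempty with rfl | hne
    · simp
    obtain ⟨x, y, r, hnd, hch, hindeg, houtdeg0⟩ := exists_maximal_path A hA hac hne
    set l : List V := x :: y :: r with hl
    have hlne : l ≠ [] := by simp [hl]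
    set t : V := l.getLast hlne with ht
    have houtdeg : outdeg A t = 0 := houtdeg0
    have hllen : l.length = r.length + 2 := by simp [hl]
    set z := l.zip l.tail with hzdef
    have hmapf : z.map Prod.fst = l.dropLast := map_fst_zip_tail l
    have hmaps : z.map Prod.snd = l.tail := map_snd_zip_tail l
    have hndf : (z.map Prod.fst).Nodup := hmapf ▸ (List.dropLast_sublist l).nodup hnd
    have hnds : (z.map Prod.snd).Nodup := hmaps ▸ (List.tail_sublist l).nodup hnd
    have hzn : z.Nodup := List.Nodup.of_map Prod.fst hndf
    set P := pathArcs l with hPdef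
    have hPsub : P ⊆ A := by
      intro p hp
      rw [hPdef, pathArcs, List.mem_toFinset] at hp
      exact chain'_zip_mem hch p hp
    have hPcard : P.card = l.length - 1 := by
      rw [hPdef, pathArcs, List.toFinset_card_of_nodup hzn]
      show (l.zip l.tail).length = l.length - 1
      rw [List.length_zip, List.length_tail]
      omega
    have hA'card : (A \ P).card = A.card - P.card := Finset.card_sdiff_of_subset hPsub
    have hPle : P.card ≤ A.card := Finset.card_le_card hPsub
    have houtP : ∀ v, outdeg P v = if v ∈ l.dropLast then 1 else 0 := by
      intro v
      have h := card_filter_toFinset z Prod.fst hndf v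
      rw [hmapf] at h
      rw [hPdef, pathArcs, outdeg]
      convert h using 2
      ext a
      simp [Finset.mem_filter, List.mem_toFinset, hzdef]
    have hinP : ∀ v, indeg P v = if v ∈ l.tail then 1 else 0 := by
      intro v
      have h := card_filter_toFinset z Prod.snd hnds v
      rw [hmaps] at h
      rw [hPdef, pathArcs, indeg]
      convert h using 2
      ext a
      simp [Finset.mem_filter, List.mem_toFinset, hzdef]
    -- membership facts
    have hxdl : x ∈ l.dropLast := by
      rw [hl, List.dropLast_cons₂]
      exact List.mem_cons_self
    have hxtl : x ∉ l.tail := by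
      have := hnd
      rw [hl, List.nodup_cons] at this
      simpa [hl] using this.1
    have htdl : t ∉ l.dropLast := by
      have hsplit := List.dropLast_append_getLast (l := l) hlne
      have hnd2 := hnd
      rw [← hsplit, List.nodup_append] at hnd2
      intro hmem
      exact hnd2.2.2 t hmem t (by rw [← ht]; exact List.mem_singleton_self t) rfl
    have hxt : x ≠ t := fun h => htdl (h ▸ hxdl)
    have httl : t ∈ l.tail := by
      have htmem : t ∈ l := by rw [ht]; exact List.getLast_mem hlne
      rw [hl, List.mem_cons] at htmem
      rcases htmem with h | h
      · exact absurd h.symm hxt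
      · simpa [hl] using h
    have hmemiff : ∀ v, v ≠ x → v ≠ t → (v ∈ l.dropLast ↔ v ∈ l.tail) := by
      intro v hvx hvt
      have h1 : v ∈ l ↔ v ∈ l.dropLast ∨ v = t := by
        conv_lhs => rw [← List.dropLast_append_getLast (l := l) hlne]
        rw [← ht]
        simp
      have h2 : v ∈ l ↔ v = x ∨ v ∈ l.tail := by
        rw [hl]; simp
      constructor
      · intro h; rcases h2.1 (h1.2 (Or.inl h)) with h' | h'
        · exact absurd h' hvx
        · exact h'
      · intro h; rcases h1.1 (h2.2 (Or.inr h)) with h' | h'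
        · exact h'
        · exact absurd h' hvt
    -- positivity of degrees at endpoints
    have hodx : 1 ≤ outdeg A x := by
      have h1 : outdeg P x ≤ outdeg A x :=
        Finset.card_le_card (Finset.filter_subset_filter _ hPsub)
      rw [houtP x, if_pos hxdl] at h1
      exact h1
    have hidt : 1 ≤ indeg A t := by
      have h1 : indeg P t ≤ indeg A t :=
        Finset.card_le_card (Finset.filter_subset_filter _ hPsub)
      rw [hinP t, if_pos httl] at h1
      exact h1
    -- the key pointwise identity
    have hfd : ∀ v, (outdeg (A \ P) v : ℤ) - indeg (A \ P) v
        = ((outdeg A v : ℤ) - indeg A v) - (if v ∈ l.dropLast then (1:ℤ) else 0)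
          + (if v ∈ l.tail then (1:ℤ) else 0) := by
      intro v
      rw [outdeg_sdiff_eq _ _ hPsub, indeg_sdiff_eq _ _ hPsub, houtP, hinP]
      split_ifs <;> push_cast <;> ring
    have hkey : ∀ v, ((outdeg A v : ℤ) - indeg A v).natAbs
        = ((outdeg (A \ P) v : ℤ) - indeg (A \ P) v).natAbs
          + (if v = x then 1 else 0) + (if v = t then 1 else 0) := by
      intro v
      rw [hfd v]
      by_cases hvx : v = x
      · subst hvx
        rw [if_pos hxdl, if_neg hxtl, if_pos rfl, if_neg hxt, hindeg]
        omega
      · by_cases hvt : v = t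
        · subst hvt
          rw [if_neg htdl, if_pos httl, if_neg hvx, if_pos rfl, houtdeg]
          omega
        · rw [if_neg hvx, if_neg hvt]
          by_cases hm : v ∈ l.tail
          · rw [if_pos hm, if_pos ((hmemiff v hvx hvt).2 hm)]
            omega
          · rw [if_neg hm, if_neg (fun h => hm ((hmemiff v hvx hvt).1 h))]
            omega
    have hsum : ∑ v, ((outdeg A v : ℤ) - indeg A v).natAbs
        = (∑ v, ((outdeg (A \ P) v : ℤ) - indeg (A \ P) v).natAbs) + 2 := by
      rw [Finset.sum_congr rfl (fun v _ => hkey v)]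
      rw [Finset.sum_add_distrib, Finset.sum_add_distrib]
      simp [Finset.sum_ite_eq', hxt]
    have hps : pSharp A = pSharp (A \ P) + 1 := by
      rw [pSharp, pSharp, hsum, Nat.add_div_right _ (by norm_num)]
    -- recursion
    have hA'le : (A \ P).card ≤ n := by omega
    have hA'loop : Loopless (A \ P) := fun a haa => hA a (Finset.sdiff_subset haa)
    have hA'ac : Acyclic (A \ P) := by
      intro l' hl'
      exact hac l' ⟨hl'.1, hl'.2.1,
        List.IsChain.imp (fun a b hab => (Finset.mem_sdiff.1 hab).1) hl'.2.2⟩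
    have hrec := ih (A \ P) hA'le hA'loop hA'ac
    have hlV : l.length ≤ Fintype.card V := hnd.length_le_card
    have hPcard' : P.card ≤ Fintype.card V - 1 := by omega
    calc A.card = (A \ P).card + P.card := by omega
      _ ≤ pSharp (A \ P) * (Fintype.card V - 1) + (Fintype.card V - 1) :=
          Nat.add_le_add hrec hPcard'
      _ = (pSharp (A \ P) + 1) * (Fintype.card V - 1) := by ring
      _ = pSharp A * (Fintype.card V - 1) := by rw [hps]

/-- For an acyclic digraph, `|A| ≤ p_#(G) (|V| - 1)`. -/
theorem stmt2 [Fintype V] (A : Finset (V × V)) (hA : Loopless A)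
    (hac : Acyclic A) :
    A.card ≤ pSharp A * (Fintype.card V - 1) := by
  exact stmt2_aux A.card A le_rfl hA hac
end

section
/- If G = (V,A) is an acyclic digraph, then |A| ≤ sqrt(2 * p_#(G)) * |V|, where p_#(G) = (1/2) * sum over vertices v of |d^+(v) - d^-(v)|. -/
open scoped Classical

variable {V : Type*}

/-- splitting a list with a duplicate -/
lemma split_of_not_nodup {α : Type*} : ∀ l : List α, ¬ l.Nodup →
    ∃ (x : α) (l1 l2 l3 : List α), l = l1 ++ x :: l2 ++ x :: l3 := by
  intro l
  induction l with
  | nil => intro h; exact absurd List.nodup_nil h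
  | cons a t ih =>
    intro h
    rw [List.nodup_cons] at h
    push_neg at h
    by_cases ha : a ∈ t
    · obtain ⟨t1, t2, rfl⟩ := List.append_of_mem ha
      exact ⟨a, [], t1, t2, by simp⟩
    · obtain ⟨x, l1, l2, l3, rfl⟩ := ih (h ha)
      exact ⟨x, a :: l1, l2, l3, by simp⟩

lemma no_closed_walk (A : Finset (V × V)) (hA : Loopless A) (hac : Acyclic A) :
    ∀ (k : ℕ) (w : List V), w.length ≤ k → 2 ≤ w.length →
      w.Chain' (fun u v => (u, v) ∈ A) → w.head? = w.getLast? → False := by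
  intro k
  induction k with
  | zero => intro w h1 h2 _ _; omega
  | succ k ih =>
    rintro (_ | ⟨a, _ | ⟨b, u⟩⟩) hlen h2 hch hhl
    · simp at h2
    · simp at h2
    · set w := a :: b :: u with hw
      have hhead : w.head? = some a := rfl
      have hlast : w.getLast? = some a := by rw [← hhl]; exact hhead
      have hwc : w.dropLast ++ [a] = w := List.dropLast_append_getLast? a hlast
      by_cases hnd : w.dropLast.Nodup
      · rcases List.eq_nil_or_concat u with rfl | ⟨u', z, rfl⟩
        · -- w = [a, b], so b = a and (a,b) ∈ A is a loop
          have hba : b = a := by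
            have : w.getLast? = some b := rfl
            rw [hlast] at this
            exact (Option.some_injective _ this.symm)
          have hab : (a, b) ∈ A := (List.isChain_cons_cons.mp hch).1
          exact hA (a, b) hab (by simpa using hba.symm)
        · -- dicycle w.dropLast
          have hclen : 2 ≤ w.dropLast.length := by
            rw [hw]; simp
          have htake : w.dropLast.take 1 = [a] := by
            have : w.dropLast = a :: (b :: u' ++ [z]).dropLast := by rw [hw]; simp
            rw [this]; rfl
          refine hac w.dropLast ⟨hclen, hnd, ?_⟩
          rw [htake, hwc]
          exact hch
      · obtain ⟨x, l1, l2, l3, hsplit⟩ := split_of_not_nodup _ hnd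
        have hinf : (x :: l2 ++ [x]) <:+: w := by
          refine ⟨l1, l3 ++ [a], ?_⟩
          rw [← hwc, hsplit]
          simp
        have hch' : (x :: l2 ++ [x]).Chain' (fun u v => (u, v) ∈ A) := hch.infix hinf
        have hlen' : (x :: l2 ++ [x]).length ≤ k := by
          have h1 : w.dropLast.length = l1.length + l2.length + l3.length + 2 := by
            rw [hsplit]; simp; omega
          have h2 : w.length = w.dropLast.length + 1 := by
            rw [← hwc]; simp
          simp only [List.length_cons, List.length_append, List.length_nil] at *
          omega
        refine ih (x :: l2 ++ [x]) hlen' (by simp) hch' ?_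
        have : (x :: l2 ++ [x]).getLast? = some x := by
          rw [show x :: l2 ++ [x] = (x :: l2) ++ [x] by simp, List.getLast?_concat]
        rw [this]; rfl

lemma acyclic_irrefl (A : Finset (V × V)) (hA : Loopless A) (hac : Acyclic A) (v : V) :
    ¬ Relation.TransGen (fun x y => (x, y) ∈ A) v v := by
  intro h
  obtain ⟨b, hvb, hbv⟩ := Relation.TransGen.head'_iff.mp h
  obtain ⟨l, hl, hlast⟩ := List.exists_isChain_cons_of_relationReflTransGen hbv
  refine no_closed_walk A hA hac (v :: b :: l).length (v :: b :: l) le_rfl (by simp) ?_ ?_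
  · exact List.isChain_cons_cons.mpr ⟨hvb, hl⟩
  · rw [List.getLast?_eq_getLast (h := by simp), List.getLast_cons (by simp), hlast]
    rfl

lemma exists_pos [Fintype V] (A : Finset (V × V)) (hA : Loopless A) (hac : Acyclic A) :
    ∃ pos : V → ℕ, Function.Injective pos ∧ (∀ v : V, pos v < Fintype.card V) ∧
      ∀ a ∈ A, pos a.1 < pos a.2 := by
  classical
  set r : V → V → Prop := fun x y => (x, y) ∈ A with hr
  set s : V → V → Prop := Relation.TransGen r with hs
  have hirr : ∀ v, ¬ s v v := acyclic_irrefl A hA hac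
  set q : V → V → Prop := fun x y => x = y ∨ s x y with hq
  haveI : IsPartialOrder V q :=
    { refl := fun a => Or.inl rfl
      trans := by
        rintro a b c (rfl | hab) (rfl | hbc)
        · exact Or.inl rfl
        · exact Or.inr hbc
        · exact Or.inr hab
        · exact Or.inr (hab.trans hbc)
      antisymm := by
        rintro a b (rfl | hab) h2
        · rfl
        · rcases h2 with rfl | hba
          · rfl
          · exact absurd (hab.trans hba) (hirr a) }
  obtain ⟨t, ht, hqt⟩ := extend_partialOrder q
  haveI := ht
  set lt : V → V → Prop := fun x y => t x y ∧ x ≠ y with hltdef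
  have hlt_trans : ∀ {x y z}, lt x y → lt y z → lt x z := by
    rintro x y z ⟨h1, h2⟩ ⟨h3, h4⟩
    refine ⟨Trans.trans h1 h3, fun hxz => ?_⟩
    subst hxz
    exact h2 (Std.Antisymm.antisymm _ _ h1 h3)
  set pos : V → ℕ := fun v => (Finset.univ.filter fun u => lt u v).card with hpos
  have hmono : ∀ {u v}, lt u v → pos u < pos v := by
    intro u v huv
    apply Finset.card_lt_card
    rw [Finset.ssubset_iff_of_subset]
    · exact ⟨u, by simpa using huv, by simp [hltdef]⟩
    · intro w hw
      simp only [Finset.mem_filter, Finset.mem_univ, true_and] at hw ⊢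
      exact hlt_trans hw huv
  refine ⟨pos, ?_, ?_, ?_⟩
  · intro u v huv
    by_contra hne
    rcases Std.Total.total (r := t) u v with h | h
    · exact absurd huv (Nat.ne_of_lt (hmono ⟨h, hne⟩))
    · exact absurd huv.symm (Nat.ne_of_lt (hmono ⟨h, Ne.symm hne⟩))
  · intro v
    have hsub : (Finset.univ.filter fun u => lt u v) ⊆ Finset.univ.erase v := by
      intro w hw
      simp only [Finset.mem_filter, Finset.mem_univ, true_and] at hw
      exact Finset.mem_erase.mpr ⟨hw.2, Finset.mem_univ w⟩
    calc pos v ≤ (Finset.univ.erase v).card := Finset.card_le_card hsub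
    _ < Finset.univ.card := Finset.card_erase_lt_of_mem (Finset.mem_univ v)
    _ = Fintype.card V := rfl
  · intro a ha
    apply hmono
    exact ⟨hqt _ _ (Or.inr (Relation.TransGen.single ha)), hA a ha⟩

lemma sum_distinct_ge (c : ℕ) (t : Finset ℕ) :
    (∀ x ∈ t, c < x) → t.card * (2 * c + t.card + 1) ≤ 2 * ∑ x ∈ t, x := by
  induction t using Finset.induction_on_max with
  | empty => simp
  | insert a s hmax ih =>
    intro h
    have hanotin : a ∉ s := fun hin => lt_irrefl a (hmax a hin)
    have hs := ih (fun x hx => h x (Finset.mem_insert_of_mem hx))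
    have hac : c < a := h a (Finset.mem_insert_self a s)
    have hcard : s.card + c + 1 ≤ a := by
      have hsub : s ⊆ Finset.Ioo c a := fun x hx =>
        Finset.mem_Ioo.mpr ⟨h x (Finset.mem_insert_of_mem hx), hmax x hx⟩
      have := Finset.card_le_card hsub
      rw [Nat.card_Ioo] at this
      omega
    rw [Finset.sum_insert hanotin, Finset.card_insert_of_notMem hanotin]
    nlinarith [hs, hcard]

/-- For an acyclic digraph, `|A| ≤ √(2 p_#(G)) |V|`. -/
theorem stmt3 [Fintype V] (A : Finset (V × V)) (hA : Loopless A)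
    (hac : Acyclic A) :
    (A.card : ℝ) ≤ Real.sqrt (2 * pSharp A) * Fintype.card V := by
  classical
  obtain ⟨pos, hinj, hposlt, hmono⟩ := exists_pos A hA hac
  set n := Fintype.card V with hn
  have fib : ∀ (f : V × V → ℤ) (g : V × V → V),
      ∑ a ∈ A, f a = ∑ v : V, ∑ a ∈ A.filter (fun a => g a = v), f a := fun f g =>
    (Finset.sum_fiberwise_of_maps_to (fun a _ => Finset.mem_univ (g a)) f).symm
  have houtsum : ∑ v : V, (outdeg A v : ℤ) = A.card := by
    have h := fib (fun _ => (1 : ℤ)) Prod.fst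
    simp only [Finset.sum_const, nsmul_eq_mul, mul_one] at h
    simp only [outdeg]
    exact h.symm
  have hinsum : ∑ v : V, (indeg A v : ℤ) = A.card := by
    have h := fib (fun _ => (1 : ℤ)) Prod.snd
    simp only [Finset.sum_const, nsmul_eq_mul, mul_one] at h
    simp only [indeg]
    exact h.symm
  set F : V → ℤ := fun v => (outdeg A v : ℤ) - indeg A v with hF
  have hF0 : ∑ v : V, F v = 0 := by
    rw [hF, Finset.sum_sub_distrib, houtsum, hinsum, sub_self]
  have habs : ∑ v : V, (F v).natAbs = 2 * ∑ v : V, (F v).toNat := by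
    have key : ∀ v : V, ((F v).natAbs : ℤ) = 2 * (F v).toNat - F v := by
      intro v
      rcases le_or_gt 0 (F v) with h | h
      · rw [Int.natAbs_of_nonneg h, Int.toNat_of_nonneg h]; ring
      · rw [Int.ofNat_natAbs_of_nonpos h.le, Int.toNat_of_nonpos h.le]
        push_cast; ring
    have h2 : (∑ v : V, ((F v).natAbs : ℤ)) = 2 * ∑ v : V, ((F v).toNat : ℤ) := by
      rw [Finset.sum_congr rfl fun v _ => key v, Finset.sum_sub_distrib, hF0,
        sub_zero, Finset.mul_sum]
    exact_mod_cast h2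
  have hpval : pSharp A = ∑ v : V, (F v).toNat := by
    have h0 : pSharp A = (∑ v : V, (F v).natAbs) / 2 := rfl
    rw [h0, habs]
    omega
  -- upper bound for S
  have h1 : ∑ a ∈ A, (pos a.2 : ℤ) = ∑ v : V, (indeg A v : ℤ) * pos v := by
    rw [fib (fun a => (pos a.2 : ℤ)) Prod.snd]
    refine Finset.sum_congr rfl fun v _ => ?_
    rw [Finset.sum_congr rfl (fun a ha => by
        rw [(Finset.mem_filter.mp ha).2] : ∀ a ∈ A.filter (fun a => a.2 = v),
          (pos a.2 : ℤ) = (pos v : ℤ)),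
      Finset.sum_const, nsmul_eq_mul]
    rfl
  have h2 : ∑ a ∈ A, (pos a.1 : ℤ) = ∑ v : V, (outdeg A v : ℤ) * pos v := by
    rw [fib (fun a => (pos a.1 : ℤ)) Prod.fst]
    refine Finset.sum_congr rfl fun v _ => ?_
    rw [Finset.sum_congr rfl (fun a ha => by
        rw [(Finset.mem_filter.mp ha).2] : ∀ a ∈ A.filter (fun a => a.1 = v),
          (pos a.1 : ℤ) = (pos v : ℤ)),
      Finset.sum_const, nsmul_eq_mul]
    rfl
  have hup : ∑ a ∈ A, ((pos a.2 : ℤ) - pos a.1) ≤ (n : ℤ) * pSharp A := by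
    have e2 : ∑ v : V, F v * ((n : ℤ) - pos v)
        = (∑ v : V, F v) * n - ∑ v : V, F v * pos v := by
      rw [Finset.sum_mul, ← Finset.sum_sub_distrib]
      exact Finset.sum_congr rfl fun v _ => by ring
    have e3 : ∑ v : V, F v * pos v
        = ∑ v : V, (outdeg A v : ℤ) * pos v - ∑ v : V, (indeg A v : ℤ) * pos v := by
      rw [← Finset.sum_sub_distrib]
      exact Finset.sum_congr rfl fun v _ => by rw [hF]; ring
    have e1 : ∑ a ∈ A, ((pos a.2 : ℤ) - pos a.1)
        = ∑ v : V, F v * ((n : ℤ) - pos v) := by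
      rw [Finset.sum_sub_distrib, h1, h2, e2, hF0, zero_mul, zero_sub, e3]
      ring
    rw [e1, hpval]
    have hterm : ∀ v ∈ Finset.univ (α := V),
        F v * ((n : ℤ) - pos v) ≤ ((F v).toNat : ℤ) * n := by
      intro v _
      have hnp : (pos v : ℤ) < (n : ℤ) := by exact_mod_cast hposlt v
      have hp0 : (0 : ℤ) ≤ (pos v : ℤ) := by positivity
      rcases le_or_gt (F v) 0 with h | h
      · have ht : (0 : ℤ) ≤ ((F v).toNat : ℤ) * n := by positivity
        nlinarith
      · rw [Int.toNat_of_nonneg h.le]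
        have : (n : ℤ) - pos v ≤ n := by linarith
        exact mul_le_mul_of_nonneg_left this h.le
    calc ∑ v : V, F v * ((n : ℤ) - pos v) ≤ ∑ v : V, ((F v).toNat : ℤ) * n :=
          Finset.sum_le_sum hterm
      _ = (n : ℤ) * ∑ v : V, ((F v).toNat : ℤ) := by rw [← Finset.sum_mul]; ring
      _ = (n : ℤ) * ((∑ v : V, (F v).toNat : ℕ) : ℤ) := by push_cast; ring
  -- lower bound: distinct lengths out of each vertex
  have hlow : ∀ v : V, (outdeg A v : ℤ) * outdeg A v
      ≤ 2 * ∑ a ∈ A.filter (fun a => a.1 = v), ((pos a.2 : ℤ) - pos a.1) := by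
    intro v
    set s := A.filter (fun a => a.1 = v) with hsdef
    have hmem : ∀ a ∈ s, a.1 = v ∧ a ∈ A := fun a ha =>
      ⟨(Finset.mem_filter.mp ha).2, (Finset.mem_filter.mp ha).1⟩
    have hinjon : ∀ a ∈ s, ∀ b ∈ s, pos a.2 = pos b.2 → a = b := by
      intro a ha b hb hab
      have h2 : a.2 = b.2 := hinj hab
      have h1 : a.1 = b.1 := ((hmem a ha).1).trans ((hmem b hb).1).symm
      exact Prod.ext h1 h2
    set t := s.image (fun a => pos a.2) with htdef
    have hcard : t.card = s.card := Finset.card_image_of_injOn fun a ha b hb =>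
      hinjon a ha b hb
    have hsum : ∑ x ∈ t, x = ∑ a ∈ s, pos a.2 := Finset.sum_image hinjon
    have hgt : ∀ x ∈ t, pos v < x := by
      intro x hx
      obtain ⟨a, ha, rfl⟩ := Finset.mem_image.mp hx
      have := hmono a (hmem a ha).2
      rwa [(hmem a ha).1] at this
    have hkey := sum_distinct_ge (pos v) t hgt
    rw [hcard, hsum] at hkey
    have hkeyz : (s.card : ℤ) * (2 * pos v + s.card + 1)
        ≤ 2 * ∑ a ∈ s, (pos a.2 : ℤ) := by exact_mod_cast hkey
    have hfst : ∑ a ∈ s, (pos a.1 : ℤ) = s.card * pos v := by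
      rw [Finset.sum_congr rfl (fun a ha => by
          rw [(hmem a ha).1] : ∀ a ∈ s, (pos a.1 : ℤ) = (pos v : ℤ)),
        Finset.sum_const, nsmul_eq_mul]
    have hod : (outdeg A v : ℤ) = s.card := by rw [hsdef]; rfl
    rw [hod, Finset.sum_sub_distrib, hfst]
    have hc0 : (0 : ℤ) ≤ (s.card : ℤ) := by positivity
    nlinarith
  -- sum the lower bounds, Cauchy-Schwarz
  have hS : ∑ v : V, (outdeg A v : ℤ) ^ 2 ≤ 2 * ∑ a ∈ A, ((pos a.2 : ℤ) - pos a.1) := by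
    rw [fib (fun a => ((pos a.2 : ℤ) - pos a.1)) Prod.fst, Finset.mul_sum]
    refine Finset.sum_le_sum fun v _ => ?_
    rw [sq]
    exact hlow v
  have hcs : (∑ v : V, (outdeg A v : ℤ)) ^ 2
      ≤ (n : ℤ) * ∑ v : V, (outdeg A v : ℤ) ^ 2 := by
    have := sq_sum_le_card_mul_sum_sq (s := (Finset.univ : Finset V))
      (f := fun v => (outdeg A v : ℤ))
    simpa [hn] using this
  have hfinal : (A.card : ℤ) ^ 2 ≤ 2 * pSharp A * (n : ℤ) ^ 2 := by
    rw [← houtsum]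
    calc (∑ v : V, (outdeg A v : ℤ)) ^ 2 ≤ (n : ℤ) * ∑ v : V, (outdeg A v : ℤ) ^ 2 := hcs
      _ ≤ (n : ℤ) * (2 * ∑ a ∈ A, ((pos a.2 : ℤ) - pos a.1)) := by
          have hn0 : (0 : ℤ) ≤ (n : ℤ) := by positivity
          exact mul_le_mul_of_nonneg_left hS hn0
      _ ≤ (n : ℤ) * (2 * ((n : ℤ) * pSharp A)) := by
          have hn0 : (0 : ℤ) ≤ (n : ℤ) := by positivity
          have := mul_le_mul_of_nonneg_left hup (by norm_num : (0:ℤ) ≤ 2)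
          exact mul_le_mul_of_nonneg_left this hn0
      _ = 2 * pSharp A * (n : ℤ) ^ 2 := by ring
  have hreal : (A.card : ℝ) ^ 2 ≤ 2 * pSharp A * (n : ℝ) ^ 2 := by exact_mod_cast hfinal
  calc (A.card : ℝ) = Real.sqrt ((A.card : ℝ) ^ 2) := (Real.sqrt_sq (by positivity)).symm
    _ ≤ Real.sqrt (2 * pSharp A * (n : ℝ) ^ 2) := Real.sqrt_le_sqrt hreal
    _ = Real.sqrt (2 * pSharp A) * n := by
        rw [Real.sqrt_mul (by positivity), Real.sqrt_sq (by positivity)]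
end

section
/- If G is a strongly connected digraph on n vertices, then G^{n-1} is Hamiltonian, where G^k is the digraph with an arc from u to v whenever there is a directed path of length at most k from u to v in G. -/
open scoped Classical

variable {V : Type*}

lemma exists_path_aux (A : Finset (V × V)) {u v : V}
    (h : Relation.ReflTransGen (fun x y => (x, y) ∈ A) u v) :
    u ≠ v → ∃ l, IsDipathFrom A u v l := by
  induction h with
  | refl => intro hne; exact absurd rfl hne
  | @tail b c hub hbc ih =>
    intro hne
    by_cases hub' : u = b
    · subst hub'
      exact ⟨[u, c], ⟨by simp, by simp [hne], List.isChain_pair.mpr hbc⟩, by simp, by simp⟩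
    · obtain ⟨l, ⟨⟨hne', hnd, hch⟩, hhd, hlast⟩⟩ := ih hub'
      by_cases hc : c ∈ l
      · obtain ⟨s, t, rfl⟩ := List.append_of_mem hc
        have hs : s ≠ [] := by
          rintro rfl
          simp at hhd
          exact hne hhd.symm
        refine ⟨s ++ [c], ⟨⟨by simp, ?_, ?_⟩, ?_, by simp⟩⟩
        · exact hnd.sublist (by
            apply List.Sublist.append_left
            exact (List.nil_sublist t).cons₂ c)
        · rw [List.Chain', List.isChain_append] at hch ⊢
          exact ⟨hch.1, List.isChain_singleton c, by simpa using hch.2.2⟩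
        · obtain ⟨x, s, rfl⟩ := List.exists_cons_of_ne_nil hs
          simpa using hhd
      · refine ⟨l ++ [c], ⟨⟨by simp [hne'], ?_, ?_⟩, ?_, by simp⟩⟩
        · simp [List.nodup_append, hnd, hc]; rintro a ha rfl; exact hc ha
        · rw [List.Chain', List.isChain_append]
          refine ⟨hch, List.isChain_singleton c, ?_⟩
          intro x hx y hy
          simp at hy
          subst hy
          rw [hlast] at hx
          simp at hx
          subst hx
          exact hbc
        · obtain ⟨x, s, rfl⟩ := List.exists_cons_of_ne_nil hne'
          simpa using hhd

/-- If `G` is a strongly connected digraph on `n ≥ 2` vertices,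
then `G^{n-1}` is Hamiltonian. -/
theorem stmt11 [Fintype V] (A : Finset (V × V)) (hA : Loopless A)
    (hn : 2 ≤ Fintype.card V) (h : StrongConn A) :
    IsHamiltonian (powRel A (Fintype.card V - 1)) := by
  have hR : ∀ x y : V, x ≠ y → powRel A (Fintype.card V - 1) x y := by
    intro x y hxy
    obtain ⟨l, hl⟩ := exists_path_aux A (h x y) hxy
    refine ⟨hxy, l, hl, ?_⟩
    have : l.length ≤ Fintype.card V := hl.1.2.1.length_le_card
    omega
  refine ⟨(Finset.univ : Finset V).toList, Finset.nodup_toList _,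
    fun v => by simp, by simpa using hn, ?_⟩
  set l := (Finset.univ : Finset V).toList with hldef
  have hnd : l.Nodup := Finset.nodup_toList _
  have hlen : 2 ≤ l.length := by simpa [hldef] using hn
  clear_value l
  obtain ⟨a, b, t, rfl⟩ : ∃ a b t, l = a :: b :: t := by
    match l, hlen with
    | a :: b :: t, _ => exact ⟨a, b, t, rfl⟩
  rw [List.Chain', List.isChain_append]
  refine ⟨(hnd.imp (fun hab => hR _ _ hab)).isChain, by simp, ?_⟩
  intro x hx y hy
  simp at hx hy
  subst hy
  have hx' : x = (a :: b :: t).getLast (by simp) := by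
    rw [List.getLast?_eq_getLast (l := b :: t) (by simp)] at hx
    simpa using hx.symm
  have hxmem : x ∈ b :: t := by
    rw [hx', List.getLast_cons (by simp)]
    exact List.getLast_mem (by simp)
  have hane : x ≠ a := by
    intro hxa
    subst hxa
    exact (List.nodup_cons.mp hnd).1 hxmem
  exact hR x a hane
end

section
/- For each integer k ≥ 4, let ℓ = k(k+1)/2 and define G_k on vertices u_1,...,u_{ℓ-1}, v_1,...,v_ℓ with arcs u_i u_j whenever 0 < j - i ≤ k, and arcs u_{ℓ - φ(i)} v_i and v_i u_{φ(i)} for each i = 1,...,ℓ, where φ(i) is the least p with sum_{j=1}^p (k+1-j) ≥ i. Then G_k is a minimally Eulerian digraph. -/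
open scoped Classical

variable {V : Type*}

/-- `ℓ = k(k+1)/2`. -/
def ell (k : ℕ) : ℕ := k * (k + 1) / 2

/-- `φ(i)` is the least `p` with `∑_{j=1}^p (k+1-j) ≥ i`. -/
noncomputable def phi (k i : ℕ) : ℕ :=
  sInf {p : ℕ | i ≤ ∑ j ∈ Finset.Icc 1 p, (k + 1 - j)}

/-- Vertices of `G_k`: `u_1,...,u_{ℓ-1}` (left) and `v_1,...,v_ℓ` (right),
where `Sum.inl i` is `u_{i+1}` and `Sum.inr m` is `v_{m+1}`. -/
abbrev GkV (k : ℕ) := Fin (ell k - 1) ⊕ Fin (ell k)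

/-- Adjacency of `G_k`: arcs `u_i → u_j` for `0 < j - i ≤ k`, and arcs
`u_{ℓ-φ(i)} → v_i` and `v_i → u_{φ(i)}` for `i = 1,...,ℓ`. -/
def GkAdj (k : ℕ) : GkV k → GkV k → Prop
  | Sum.inl i, Sum.inl j => i.val < j.val ∧ j.val - i.val ≤ k
  | Sum.inl i, Sum.inr m => i.val + 1 = ell k - phi k (m.val + 1)
  | Sum.inr m, Sum.inl j => j.val + 1 = phi k (m.val + 1)
  | Sum.inr _, Sum.inr _ => False

/-- The arc set of `G_k`. -/
noncomputable def GkArcs (k : ℕ) : Finset (GkV k × GkV k) :=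
  Finset.univ.filter (fun p => GkAdj k p.1 p.2)

-- ===== auxiliary lemmas for stmt15 =====
section Stmt15Aux

open Finset

lemma card_filter_sumtype {α β : Type*} [Fintype α] [Fintype β] (P : α ⊕ β → Prop) :
    ((univ : Finset (α ⊕ β)).filter P).card
      = ((univ : Finset α).filter fun a => P (Sum.inl a)).card
        + ((univ : Finset β).filter fun b => P (Sum.inr b)).card := by
  rw [← Fintype.card_subtype, ← Fintype.card_subtype, ← Fintype.card_subtype,
    Fintype.card_congr (Equiv.subtypeSum (p := P)), Fintype.card_sum]

lemma card_fin_filter_Ico (L a b : ℕ) (hb : b ≤ L) :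
    ((univ : Finset (Fin L)).filter (fun m => a ≤ m.val ∧ m.val < b)).card = b - a := by
  have himg : ((univ : Finset (Fin L)).filter (fun m => a ≤ m.val ∧ m.val < b)).image Fin.val
      = Finset.Ico a b := by
    ext n
    simp only [Finset.mem_image, Finset.mem_filter, Finset.mem_univ, true_and, Finset.mem_Ico]
    constructor
    · rintro ⟨m, hm, rfl⟩; exact hm
    · rintro ⟨h1, h2⟩; exact ⟨⟨n, lt_of_lt_of_le h2 hb⟩, ⟨h1, h2⟩, rfl⟩
  rw [← Nat.card_Ico a b, ← himg, Finset.card_image_of_injective _ Fin.val_injective]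

lemma card_fin_filter_eq (n c : ℕ) (h1 : 1 ≤ c) (h2 : c ≤ n) :
    ((univ : Finset (Fin n)).filter (fun j => j.val + 1 = c)).card = 1 := by
  rw [Finset.card_eq_one]
  refine ⟨⟨c - 1, by omega⟩, ?_⟩
  ext j
  simp only [Finset.mem_filter, Finset.mem_univ, true_and, Finset.mem_singleton, Fin.ext_iff]
  omega

/-- Partial sums appearing in the definition of `phi`. -/
def Sk (k p : ℕ) : ℕ := ∑ j ∈ Finset.Icc 1 p, (k + 1 - j)

lemma phi_def (k i : ℕ) : phi k i = sInf {p : ℕ | i ≤ Sk k p} := rfl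

lemma Sk_zero (k : ℕ) : Sk k 0 = 0 := by simp [Sk]

lemma Sk_succ (k p : ℕ) : Sk k (p + 1) = Sk k p + (k - p) := by
  rw [Sk, Sk, Finset.sum_Icc_succ_top (by omega : 1 ≤ p + 1)]
  omega

lemma Sk_mono (k : ℕ) : Monotone (Sk k) := fun a b h =>
  Finset.sum_le_sum_of_subset (Finset.Icc_subset_Icc_right h)

lemma sum_Icc_id_mul_two (n : ℕ) : (∑ j ∈ Finset.Icc 1 n, j) * 2 = n * (n + 1) := by
  induction n with
  | zero => simp
  | succ n ih =>
    rw [Finset.sum_Icc_succ_top (by omega : 1 ≤ n + 1), Nat.add_mul, ih]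
    ring

lemma ell_mul_two (k : ℕ) : ell k * 2 = k * (k + 1) := by
  rw [ell, Nat.div_mul_cancel]
  exact (Nat.even_mul_succ_self k).two_dvd

lemma Sk_top (k : ℕ) : Sk k k = ell k := by
  have h1 : Sk k k = ∑ j ∈ Finset.Icc 1 k, j := by
    refine Finset.sum_nbij' (fun j => k + 1 - j) (fun j => k + 1 - j) ?_ ?_ ?_ ?_ ?_ <;>
      intro a ha <;> simp only [Finset.mem_Icc] at * <;> omega
  have h2 := sum_Icc_id_mul_two k
  have h3 := ell_mul_two k
  omega

lemma phi_mem (k : ℕ) {i : ℕ} (h1 : 1 ≤ i) (h2 : i ≤ ell k) :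
    i ≤ Sk k (phi k i) ∧ 1 ≤ phi k i ∧ phi k i ≤ k ∧ Sk k (phi k i - 1) < i := by
  have hne : k ∈ {p : ℕ | i ≤ Sk k p} := by
    rw [Set.mem_setOf_eq, Sk_top]; exact h2
  have hmem : i ≤ Sk k (phi k i) := by
    rw [phi_def]; exact Nat.sInf_mem ⟨k, hne⟩
  have hle : phi k i ≤ k := by rw [phi_def]; exact Nat.sInf_le hne
  have h1' : 1 ≤ phi k i := by
    by_contra h
    have h0 : phi k i = 0 := by omega
    rw [h0, Sk_zero] at hmem; omega
  refine ⟨hmem, h1', hle, ?_⟩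
  by_contra h
  push_neg at h
  have : phi k i ≤ phi k i - 1 := by rw [phi_def]; exact Nat.sInf_le h
  omega

lemma phi_eq (k : ℕ) {i p : ℕ} (hp1 : 1 ≤ p) (hpk : p ≤ k)
    (hlt : Sk k (p - 1) < i) (hle : i ≤ Sk k p) : phi k i = p := by
  have hub : phi k i ≤ p := by rw [phi_def]; exact Nat.sInf_le hle
  have hiL : i ≤ ell k := by
    calc i ≤ Sk k p := hle
    _ ≤ Sk k k := Sk_mono k hpk
    _ = ell k := Sk_top k
  obtain ⟨hm, h1', _, _⟩ := phi_mem k (by omega : 1 ≤ i) hiL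
  by_contra hne
  have hlt' : phi k i ≤ p - 1 := by omega
  have := Sk_mono k hlt'
  omega

lemma phi_count (k p : ℕ) (hp1 : 1 ≤ p) (hpk : p ≤ k) :
    ((univ : Finset (Fin (ell k))).filter (fun m => phi k (m.val + 1) = p)).card
      = k + 1 - p := by
  have hiff : ∀ m : Fin (ell k), phi k (m.val + 1) = p ↔
      (Sk k (p - 1) ≤ m.val ∧ m.val < Sk k p) := by
    intro m
    have hb1 : 1 ≤ m.val + 1 := by omega
    have hb2 : m.val + 1 ≤ ell k := m.isLt
    constructor
    · intro h
      obtain ⟨hm, _, _, hlt⟩ := phi_mem k hb1 hb2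
      rw [h] at hm hlt; omega
    · rintro ⟨ha, hb⟩
      exact phi_eq k hp1 hpk (by omega) (by omega)
  rw [Finset.filter_congr (fun m _ => hiff m),
    card_fin_filter_Ico _ _ _ (by rw [← Sk_top k]; exact Sk_mono k hpk)]
  have hs := Sk_succ k (p - 1)
  have hp : p - 1 + 1 = p := by omega
  rw [hp] at hs
  omega

lemma phi_count_big (k p : ℕ) (hpk : k < p) :
    ((univ : Finset (Fin (ell k))).filter (fun m => phi k (m.val + 1) = p)).card = 0 := by
  rw [Finset.card_eq_zero, Finset.filter_eq_empty_iff]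
  intro m _
  have hb2 : m.val + 1 ≤ ell k := m.isLt
  obtain ⟨_, _, hle, _⟩ := phi_mem k (by omega) hb2
  omega

lemma phi_bounds (k : ℕ) (m : Fin (ell k)) :
    1 ≤ phi k (m.val + 1) ∧ phi k (m.val + 1) ≤ k :=
  ⟨(phi_mem k (by omega) m.isLt).2.1, (phi_mem k (by omega) m.isLt).2.2.1⟩

lemma mem_GkArcs {k : ℕ} {x y : GkV k} : (x, y) ∈ GkArcs k ↔ GkAdj k x y := by
  simp [GkArcs]

lemma outdeg_GkArcs (k : ℕ) (v : GkV k) :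
    outdeg (GkArcs k) v = ((univ : Finset (GkV k)).filter (fun w => GkAdj k v w)).card := by
  unfold outdeg GkArcs
  rw [Finset.filter_filter]
  refine Finset.card_nbij' (fun a => a.2) (fun w => (v, w)) ?_ ?_ ?_ ?_
  · intro a ha
    simp only [Finset.mem_coe, Finset.mem_filter, Finset.mem_univ, true_and] at *
    obtain ⟨h1, h2⟩ := ha
    rw [← h2]; exact h1
  · intro w hw
    simp only [Finset.mem_coe, Finset.mem_filter, Finset.mem_univ, true_and] at *
    exact ⟨hw, trivial⟩
  · intro a ha
    simp only [Finset.mem_coe, Finset.mem_filter, Finset.mem_univ, true_and] at ha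
    exact Prod.ext ha.2.symm rfl
  · intro w hw
    rfl

lemma indeg_GkArcs (k : ℕ) (v : GkV k) :
    indeg (GkArcs k) v = ((univ : Finset (GkV k)).filter (fun w => GkAdj k w v)).card := by
  unfold indeg GkArcs
  rw [Finset.filter_filter]
  refine Finset.card_nbij' (fun a => a.1) (fun w => (w, v)) ?_ ?_ ?_ ?_
  · intro a ha
    simp only [Finset.mem_coe, Finset.mem_filter, Finset.mem_univ, true_and] at *
    obtain ⟨h1, h2⟩ := ha
    rw [← h2]; exact h1
  · intro w hw
    simp only [Finset.mem_coe, Finset.mem_filter, Finset.mem_univ, true_and] at *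
    exact ⟨hw, trivial⟩
  · intro a ha
    simp only [Finset.mem_coe, Finset.mem_filter, Finset.mem_univ, true_and] at ha
    exact Prod.ext rfl ha.2.symm
  · intro w hw
    rfl

lemma ell_ge (k : ℕ) (hk : 4 ≤ k) : 2 * k + 2 ≤ ell k := by
  have h1 := ell_mul_two k
  have h2 : 4 * k + 4 ≤ k * (k + 1) := by nlinarith
  omega

end Stmt15Aux
section Stmt15Aux2
open Finset

lemma Gk_balanced (k : ℕ) (hk : 4 ≤ k) (v : GkV k) :
    outdeg (GkArcs k) v = indeg (GkArcs k) v := by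
  have hL := ell_ge k hk
  rw [outdeg_GkArcs, indeg_GkArcs]
  rw [card_filter_sumtype (fun w => GkAdj k v w), card_filter_sumtype (fun w => GkAdj k w v)]
  cases v with
  | inr m =>
    obtain ⟨hp1, hpk⟩ := phi_bounds k m
    have h1 : ((univ : Finset (Fin (ell k - 1))).filter
        fun a => GkAdj k (Sum.inr m) (Sum.inl a)).card = 1 := by
      refine (congrArg Finset.card (Finset.filter_congr fun a _ => ?_)).trans
        (card_fin_filter_eq (ell k - 1) (phi k (m.val + 1)) hp1 (by omega))
      exact Iff.rfl
    have h2 : ((univ : Finset (Fin (ell k))).filter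
        fun b => GkAdj k (Sum.inr m) (Sum.inr b)).card = 0 := by
      rw [Finset.card_eq_zero, Finset.filter_eq_empty_iff]
      intro b _ h
      exact h
    have h3 : ((univ : Finset (Fin (ell k - 1))).filter
        fun a => GkAdj k (Sum.inl a) (Sum.inr m)).card = 1 := by
      refine (congrArg Finset.card (Finset.filter_congr fun a _ => ?_)).trans
        (card_fin_filter_eq (ell k - 1) (ell k - phi k (m.val + 1)) (by omega) (by omega))
      exact Iff.rfl
    have h4 : ((univ : Finset (Fin (ell k))).filter
        fun b => GkAdj k (Sum.inr b) (Sum.inr m)).card = 0 := by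
      rw [Finset.card_eq_zero, Finset.filter_eq_empty_iff]
      intro b _ h
      exact h
    rw [h1, h2, h3, h4]
  | inl i =>
    have hti : i.val < ell k - 1 := i.isLt
    set t := i.val with ht
    -- out-neighbours among u's
    have h1 : ((univ : Finset (Fin (ell k - 1))).filter
        fun a => GkAdj k (Sum.inl i) (Sum.inl a)).card
          = min (t + k + 1) (ell k - 1) - (t + 1) := by
      have : ∀ a : Fin (ell k - 1), GkAdj k (Sum.inl i) (Sum.inl a) ↔
          (t + 1 ≤ a.val ∧ a.val < min (t + k + 1) (ell k - 1)) := by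
        intro a
        have := a.isLt
        show (t < a.val ∧ a.val - t ≤ k) ↔ _
        omega
      rw [Finset.filter_congr (fun a _ => this a)]
      exact card_fin_filter_Ico _ _ _ (min_le_right _ _)
    -- out-neighbours among v's
    have h2 : ((univ : Finset (Fin (ell k))).filter
        fun b => GkAdj k (Sum.inl i) (Sum.inr b)).card
          = (if ell k - 1 - t ≤ k then k + 1 - (ell k - 1 - t) else 0) := by
      have heq : ∀ b : Fin (ell k), GkAdj k (Sum.inl i) (Sum.inr b) ↔
          phi k (b.val + 1) = ell k - 1 - t := by
        intro b
        obtain ⟨hb1, hbk⟩ := phi_bounds k b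
        show t + 1 = ell k - phi k (b.val + 1) ↔ _
        omega
      rw [Finset.filter_congr (fun b _ => heq b)]
      by_cases hc : ell k - 1 - t ≤ k
      · rw [if_pos hc]
        exact phi_count k _ (by omega) hc
      · rw [if_neg hc]
        exact phi_count_big k _ (by omega)
    -- in-neighbours among u's
    have h3 : ((univ : Finset (Fin (ell k - 1))).filter
        fun a => GkAdj k (Sum.inl a) (Sum.inl i)).card = t - (t - k) := by
      have : ∀ a : Fin (ell k - 1), GkAdj k (Sum.inl a) (Sum.inl i) ↔
          (t - k ≤ a.val ∧ a.val < t) := by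
        intro a
        show (a.val < t ∧ t - a.val ≤ k) ↔ _
        omega
      rw [Finset.filter_congr (fun a _ => this a)]
      exact card_fin_filter_Ico _ _ _ (by omega)
    -- in-neighbours among v's
    have h4 : ((univ : Finset (Fin (ell k))).filter
        fun b => GkAdj k (Sum.inr b) (Sum.inl i)).card
          = (if t + 1 ≤ k then k + 1 - (t + 1) else 0) := by
      have heq : ∀ b : Fin (ell k), GkAdj k (Sum.inr b) (Sum.inl i) ↔
          phi k (b.val + 1) = t + 1 := by
        intro b
        show i.val + 1 = phi k (b.val + 1) ↔ _
        omega
      rw [Finset.filter_congr (fun b _ => heq b)]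
      by_cases hc : t + 1 ≤ k
      · rw [if_pos hc]
        exact phi_count k _ (by omega) hc
      · rw [if_neg hc]
        exact phi_count_big k _ (by omega)
    rw [h1, h2, h3, h4]
    split_ifs <;> omega

end Stmt15Aux2
section Stmt15Aux3
open Finset

lemma phi_one (k : ℕ) (hk : 1 ≤ k) : phi k 1 = 1 := by
  refine phi_eq k le_rfl hk ?_ ?_
  · simp [Sk_zero]
  · have := Sk_succ k 0
    rw [Sk_zero] at this
    simp only [Nat.zero_add] at this
    omega

lemma Gk_reach_step {k : ℕ} {x y : GkV k} (h : GkAdj k x y) :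
    Relation.ReflTransGen (fun a b => (a, b) ∈ GkArcs k) x y :=
  Relation.ReflTransGen.single (mem_GkArcs.mpr h)

lemma Gk_reach_inl_of_le (k : ℕ) (hk : 4 ≤ k) :
    ∀ n : ℕ, ∀ a b : Fin (ell k - 1), b.val = a.val + n →
      Relation.ReflTransGen (fun x y => (x, y) ∈ GkArcs k) (Sum.inl a) (Sum.inl b) := by
  intro n
  induction n with
  | zero =>
    intro a b h
    have : a = b := Fin.ext (by omega)
    rw [this]
  | succ n ih =>
    intro a b h
    have hlt : a.val + 1 < ell k - 1 := by have := b.isLt; omega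
    have step : GkAdj k (Sum.inl a) (Sum.inl (⟨a.val + 1, hlt⟩ : Fin (ell k - 1))) := by
      show a.val < a.val + 1 ∧ a.val + 1 - a.val ≤ k
      omega
    exact (Gk_reach_step step).trans (ih ⟨a.val + 1, hlt⟩ b (by simp; omega))

lemma Gk_strong (k : ℕ) (hk : 4 ≤ k) : StrongConn (GkArcs k) := by
  have hL := ell_ge k hk
  have h0 : (0 : ℕ) < ell k - 1 := by omega
  have hlast : ell k - 2 < ell k - 1 := by omega
  intro x y
  -- from any vertex we can reach some left vertex
  have hx : ∃ a : Fin (ell k - 1), Relation.ReflTransGen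
      (fun u v => (u, v) ∈ GkArcs k) x (Sum.inl a) := by
    cases x with
    | inl a => exact ⟨a, Relation.ReflTransGen.refl⟩
    | inr m =>
      obtain ⟨hp1, hpk⟩ := phi_bounds k m
      refine ⟨⟨phi k (m.val + 1) - 1, by omega⟩, Gk_reach_step ?_⟩
      show phi k (m.val + 1) - 1 + 1 = phi k (m.val + 1)
      omega
  -- from any left vertex we can reach u_0
  have hback : ∀ a : Fin (ell k - 1), Relation.ReflTransGen
      (fun u v => (u, v) ∈ GkArcs k) (Sum.inl a) (Sum.inl (⟨0, h0⟩ : Fin (ell k - 1))) := by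
    intro a
    have h1 : Relation.ReflTransGen (fun u v => (u, v) ∈ GkArcs k)
        (Sum.inl a) (Sum.inl (⟨ell k - 2, hlast⟩ : Fin (ell k - 1))) := by
      refine Gk_reach_inl_of_le k hk (ell k - 2 - a.val) a _ ?_
      have := a.isLt; simp; omega
    have h2 : GkAdj k (Sum.inl (⟨ell k - 2, hlast⟩ : Fin (ell k - 1)))
        (Sum.inr (⟨0, by omega⟩ : Fin (ell k))) := by
      show ell k - 2 + 1 = ell k - phi k (0 + 1)
      rw [phi_one k (by omega)]
      omega
    have h3 : GkAdj k (Sum.inr (⟨0, by omega⟩ : Fin (ell k)))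
        (Sum.inl (⟨0, h0⟩ : Fin (ell k - 1))) := by
      show 0 + 1 = phi k (0 + 1)
      rw [phi_one k (by omega)]
    exact (h1.trans (Gk_reach_step h2)).trans (Gk_reach_step h3)
  -- from u_0 we can reach anything
  have hfwd : Relation.ReflTransGen (fun u v => (u, v) ∈ GkArcs k)
      (Sum.inl (⟨0, h0⟩ : Fin (ell k - 1))) y := by
    cases y with
    | inl b => exact Gk_reach_inl_of_le k hk b.val _ b (by simp)
    | inr m =>
      obtain ⟨hp1, hpk⟩ := phi_bounds k m
      have hmid : (ell k - phi k (m.val + 1) - 1) < ell k - 1 := by omega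
      have h1 := Gk_reach_inl_of_le k hk (ell k - phi k (m.val + 1) - 1)
        ⟨0, h0⟩ ⟨ell k - phi k (m.val + 1) - 1, hmid⟩ (by simp)
      have h2 : GkAdj k (Sum.inl (⟨ell k - phi k (m.val + 1) - 1, hmid⟩ : Fin (ell k - 1)))
          (Sum.inr m) := by
        show ell k - phi k (m.val + 1) - 1 + 1 = ell k - phi k (m.val + 1)
        omega
      exact h1.trans (Gk_reach_step h2)
  obtain ⟨a, ha⟩ := hx
  exact (ha.trans (hback a)).trans hfwd

lemma cycle_succ {V : Type*} {A : Finset (V × V)} {l : List V} (hc : IsDicycle A l)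
    {x : V} (hx : x ∈ l) :
    ∃ y, y ∈ l ∧ (x, y) ∈ A ∧ (x, y) ∈ cycleArcs l := by
  classical
  obtain ⟨hlen, hnd, hch⟩ := hc
  have hlen' : (l ++ l.take 1).length = l.length + 1 := by
    rw [List.length_append, List.length_take]; omega
  obtain ⟨n, hn, hget⟩ := List.mem_iff_getElem.mp hx
  have hn1 : n + 1 < (l ++ l.take 1).length := by omega
  have hn1' : n < (l ++ l.take 1).length := by omega
  have hchain := List.isChain_iff_getElem.mp hch n (by omega)
  have hxeq : (l ++ l.take 1)[n]'hn1' = x := by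
    rw [List.getElem_append_left hn]; exact hget
  refine ⟨(l ++ l.take 1)[n+1]'hn1, ?_, ?_, ?_⟩
  · have hmm : (l ++ l.take 1)[n+1]'hn1 ∈ l ++ l.take 1 := List.getElem_mem hn1
    rcases List.mem_append.mp hmm with h | h
    · exact h
    · exact List.mem_of_mem_take h
  · rw [← hxeq]
    exact hchain
  · rw [cycleArcs, pathArcs, List.mem_toFinset]
    have hzlen : n < ((l ++ l.take 1).zip (l ++ l.take 1).tail).length := by
      rw [List.length_zip, List.length_tail]; omega
    have hze : ((l ++ l.take 1).zip (l ++ l.take 1).tail)[n]'hzlen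
        = (x, (l ++ l.take 1)[n+1]'hn1) := by
      rw [List.getElem_zip, List.getElem_tail, hxeq]
    rw [← hze]
    exact List.getElem_mem hzlen

lemma Gk_min (k : ℕ) (hk : 4 ≤ k) (l : List (GkV k)) (hcyc : IsDicycle (GkArcs k) l) :
    ¬ StrongConn (GkArcs k \ cycleArcs l) := by
  have hL := ell_ge k hk
  have h0 : (0 : ℕ) < ell k - 1 := by omega
  intro hsc
  -- the cycle must contain a right vertex
  have hexr : ∃ m : Fin (ell k), Sum.inr m ∈ l := by
    by_contra hno
    push_neg at hno
    have hlen := hcyc.1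
    have hne : l ≠ [] := by
      intro h; rw [h] at hlen; simp at hlen
    have hne' : l.toFinset.Nonempty := by
      rw [← Finset.coe_nonempty, List.coe_toFinset]
      exact ⟨l.head hne, List.head_mem hne⟩
    obtain ⟨x, hxmem, hmax⟩ := Finset.exists_max_image l.toFinset
      (fun z => match z with | Sum.inl i => i.val | Sum.inr _ => 0) hne'
    rw [List.mem_toFinset] at hxmem
    obtain ⟨y, hyl, hyA, _⟩ := cycle_succ hcyc hxmem
    cases x with
    | inr m => exact hno m hxmem
    | inl i =>
      cases y with
      | inr m => exact hno m hyl
      | inl j =>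
        have hadj := mem_GkArcs.mp hyA
        obtain ⟨hij, _⟩ := hadj
        have := hmax (Sum.inl j) (List.mem_toFinset.mpr hyl)
        simp only at this
        omega
  obtain ⟨m, hm⟩ := hexr
  obtain ⟨y, hyl, hyA, hyC⟩ := cycle_succ hcyc hm
  -- strong connectivity after removal gives a step out of (inr m)
  have hreach := hsc (Sum.inr m) (Sum.inl (⟨0, h0⟩ : Fin (ell k - 1)))
  rcases Relation.ReflTransGen.cases_head hreach with heq | ⟨z, hz, _⟩
  · cases heq
  · rw [Finset.mem_sdiff] at hz
    obtain ⟨hzA, hzC⟩ := hz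
    have hz' := mem_GkArcs.mp hzA
    have hy' := mem_GkArcs.mp hyA
    cases z with
    | inr m' => exact hz'
    | inl j =>
      cases y with
      | inr m' => exact hy'
      | inl j' =>
        have hjj : j = j' := by
          apply Fin.ext
          have h1 : j.val + 1 = phi k (m.val + 1) := hz'
          have h2 : j'.val + 1 = phi k (m.val + 1) := hy'
          omega
        rw [hjj] at hzC
        exact hzC hyC

end Stmt15Aux3

/-- For `k ≥ 4`, the digraph `G_k` is minimally Eulerian. -/
theorem stmt15 (k : ℕ) (hk : 4 ≤ k) : MinEuler (GkArcs k) := by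
  refine ⟨⟨Gk_strong k hk, Gk_balanced k hk⟩, fun l hl => ?_⟩
  have h := Gk_min k hk l hl
  convert h using 2
  ext a
  simp [Finset.mem_sdiff]
end

section
/- For each k ≥ 4, the power G_k^m of the digraph G_k with m = floor(sqrt(n)/2), where n = k^2 + k - 1 is the number of vertices, is not Hamiltonian. -/
open scoped Classical

variable {V : Type*}

/-! ### Auxiliary lemmas -/

lemma aux_sqrt (k : ℕ) (hk : 1 ≤ k) : Nat.sqrt (k ^ 2 + k - 1) = k := by
  have h : k ^ 2 + k - 1 = k ^ 2 + (k - 1) := by omega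
  rw [h]
  exact Nat.sqrt_add_eq' k (by omega)

lemma aux_ell_succ (n : ℕ) : ell (n + 1) = ell n + (n + 1) := by
  unfold ell
  have h : (n + 1) * (n + 1 + 1) = n * (n + 1) + (n + 1) * 2 := by ring
  rw [h, Nat.add_mul_div_right _ _ (by norm_num : (0:ℕ) < 2)]

lemma aux_two_ell (k : ℕ) : 2 * ell k = k * (k + 1) := by
  unfold ell
  rw [mul_comm, Nat.div_mul_cancel ((Nat.even_mul_succ_self k).two_dvd)]

lemma aux_k_le_ell (k : ℕ) : k ≤ ell k := by
  have h := aux_two_ell k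
  nlinarith [sq_nonneg k, Nat.zero_le k]

lemma aux_sum_icc (k : ℕ) : ∑ j ∈ Finset.Icc 1 k, (k + 1 - j) = ell k := by
  induction k with
  | zero => simp [ell]
  | succ n ih =>
    rw [Finset.sum_Icc_succ_top (by omega : 1 ≤ n + 1)]
    have h : ∑ j ∈ Finset.Icc 1 n, (n + 1 + 1 - j) = ∑ j ∈ Finset.Icc 1 n, ((n + 1 - j) + 1) := by
      apply Finset.sum_congr rfl
      intro j hj
      simp only [Finset.mem_Icc] at hj
      omega
    rw [h, Finset.sum_add_distrib, ih, Finset.sum_const, Nat.card_Icc, aux_ell_succ,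
      smul_eq_mul]
    omega

lemma aux_phi_le (k i : ℕ) (hi : i ≤ ell k) : phi k i ≤ k := by
  apply Nat.sInf_le
  simpa [Set.mem_setOf_eq, aux_sum_icc] using hi

/-- Walking among `u`-vertices to reach some `v`-vertex needs many steps. -/
lemma aux_reach (k : ℕ) : ∀ (t : List (GkV k)) (i : Fin (ell k - 1)),
    (Sum.inl i :: t).Chain' (GkAdj k) → (∃ c : Fin (ell k), Sum.inr c ∈ t) →
    ell k ≤ i.val + 1 + k * t.length := by
  intro t
  induction t with
  | nil => rintro i _ ⟨c, hc⟩; simp at hc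
  | cons x t' ih =>
    rintro i hchain ⟨c, hc⟩
    have harc : GkAdj k (Sum.inl i) x := (List.isChain_cons_cons.mp hchain).1
    match x with
    | Sum.inr d =>
      have hphi : phi k (d.val + 1) ≤ k := aux_phi_le k _ (by omega)
      have h1 : i.val + 1 = ell k - phi k (d.val + 1) := harc
      have hkl : k ≤ ell k := aux_k_le_ell k
      simp only [List.length_cons]
      have h2 : ell k ≤ i.val + 1 + k := by omega
      nlinarith [Nat.zero_le (k * t'.length)]
    | Sum.inl i' =>
      have h1 : i.val < i'.val ∧ i'.val - i.val ≤ k := harc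
      have hc' : Sum.inr c ∈ t' := by
        rcases List.mem_cons.mp hc with h | h
        · exact absurd h (by simp)
        · exact h
      have h2 := ih i' (List.isChain_cons_cons.mp hchain).2 ⟨c, hc'⟩
      simp only [List.length_cons]
      have hk : k * (t'.length + 1) = k * t'.length + k := by ring
      omega

/-- No two `v`-vertices are joined in the `⌊k/2⌋`-th power. -/
lemma aux_no_vv (k : ℕ) (hk : 4 ≤ k) (a b : Fin (ell k)) :
    ¬ powRel (GkArcs k) (Nat.sqrt (k ^ 2 + k - 1) / 2) (Sum.inr a) (Sum.inr b) := by
  rintro ⟨hne, l, ⟨⟨hnil, hnd, hcha⟩, hhead, hlast⟩, hlen⟩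
  rw [aux_sqrt k (by omega)] at hlen
  have hchain : l.Chain' (GkAdj k) := by
    refine hcha.imp ?_
    intro x y hxy
    simpa [GkArcs, Finset.mem_filter] using hxy
  match l, hnil with
  | v :: t, _ =>
    have hv : v = Sum.inr a := by simpa using hhead
    subst hv
    match t with
    | [] =>
      have : (Sum.inr a : GkV k) = Sum.inr b := by simpa using hlast
      exact hne this
    | x :: t' =>
      have harc : GkAdj k (Sum.inr a) x := (List.isChain_cons_cons.mp hchain).1
      match x with
      | Sum.inr c => exact harc
      | Sum.inl i =>
        have hphi : i.val + 1 = phi k (a.val + 1) := harc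
        have hphile : phi k (a.val + 1) ≤ k := aux_phi_le k _ (by omega)
        have hbt : Sum.inr b ∈ t' := by
          have hlast' : (Sum.inl i :: t').getLast? = some (Sum.inr b) := by
            simpa [List.getLast?_cons_cons] using hlast
          have hmem : (Sum.inr b : GkV k) ∈ Sum.inl i :: t' := by
            rcases List.mem_getLast?_eq_getLast hlast' with ⟨h, h2⟩
            rw [h2]
            exact List.getLast_mem h
          rcases List.mem_cons.mp hmem with h | h
          · exact absurd h (by simp)
          · exact h
        have hreach := aux_reach k t' i (List.isChain_cons_cons.mp hchain).2 ⟨b, hbt⟩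
        -- ell k ≤ i+1 + k * t'.length ≤ k * (t'.length + 1)
        have h1 : ell k ≤ k * (t'.length + 1) := by
          have : k * (t'.length + 1) = k * t'.length + k := by ring
          omega
        have h2 : k * (k + 1) ≤ k * (2 * (t'.length + 1)) := by
          calc k * (k + 1) = 2 * ell k := (aux_two_ell k).symm
          _ ≤ 2 * (k * (t'.length + 1)) := by omega
          _ = k * (2 * (t'.length + 1)) := by ring
        have h3 : k + 1 ≤ 2 * (t'.length + 1) :=
          Nat.le_of_mul_le_mul_left h2 (by omega)
        -- hlen : (Sum.inr a :: Sum.inl i :: t').length ≤ k / 2 + 1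
        simp only [List.length_cons] at hlen
        omega

theorem lemB {α : Type*} (P : α → Bool) : ∀ l : List α,
    l.Chain' (fun a b => ¬(P a = true ∧ P b = true)) →
    (∀ h, l.head? = some h → P h = false) →
    2 * l.countP P ≤ l.length
  | [], _, _ => by simp
  | [a], _, hh => by
    have := hh a rfl
    simp [List.countP_cons, this]
  | a :: b :: t, hc, hh => by
    have hPa : P a = false := hh a rfl
    have hab := (List.isChain_cons_cons.mp hc).1
    have hct : (b :: t).Chain' _ := (List.isChain_cons_cons.mp hc).2
    by_cases hPb : P b = true
    · have hht : ∀ h, t.head? = some h → P h = false := by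
        intro h hh'
        match t, hh' with
        | c :: t', rfl =>
          have := (List.isChain_cons_cons.mp hct).1
          simp only [hPb, true_and, not_true_eq_false] at this ⊢
          exact Bool.not_eq_true _ |>.mp this
      have := lemB P t (hct.tail) hht
      simp only [List.countP_cons, hPa, hPb, List.length_cons]
      simp only [if_true, if_false, Bool.false_eq_true]
      omega
    · have := lemB P (b :: t) hct (by intro h hh'; simp at hh'; subst hh'; simpa using hPb)
      simp only [List.countP_cons, hPa, List.length_cons] at *
      simp only [hPb, if_false, Bool.false_eq_true] at *
      omega

/-- For `k ≥ 4`, with `n = k² + k - 1` vertices, the power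
`G_k^{⌊√n / 2⌋}` is not Hamiltonian. -/
theorem stmt18 (k : ℕ) (hk : 4 ≤ k) :
    ¬ IsHamiltonian (powRel (GkArcs k) (Nat.sqrt (k ^ 2 + k - 1) / 2)) := by
  rintro ⟨l, hnd, hall, hlen2, hchain⟩
  set P : GkV k → Bool := fun x => x.isRight with hP
  -- no two consecutive (cyclically) vertices are both `v`-vertices
  have hch2 : (l ++ l.take 1).Chain' (fun x y => ¬(P x = true ∧ P y = true)) := by
    refine hchain.imp ?_
    rintro x y hR ⟨hx, hy⟩
    rcases Sum.isRight_iff.mp hx with ⟨a, rfl⟩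
    rcases Sum.isRight_iff.mp hy with ⟨b, rfl⟩
    exact aux_no_vv k hk a b hR
  -- counting
  have hcount : ell k ≤ l.countP P := by
    have huniv : l.toFinset = Finset.univ :=
      Finset.eq_univ_iff_forall.mpr (fun x => List.mem_toFinset.mpr (hall x))
    have hsub : (Finset.univ.image (Sum.inr : Fin (ell k) → GkV k)) ⊆
        Finset.univ.filter (fun x => P x = true) := by
      intro x hx
      rcases Finset.mem_image.mp hx with ⟨m, _, rfl⟩
      simp [hP]
    have hcard : ell k ≤ (Finset.univ.filter (fun x : GkV k => P x = true)).card := by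
      have := Finset.card_le_card hsub
      rwa [Finset.card_image_of_injective _ Sum.inr_injective, Finset.card_univ,
        Fintype.card_fin] at this
    calc ell k ≤ (Finset.univ.filter (fun x : GkV k => P x = true)).card := hcard
      _ = ((l.filter P).toFinset).card := by rw [List.toFinset_filter, huniv]
      _ ≤ (l.filter P).length := List.toFinset_card_le _
      _ = l.countP P := List.countP_eq_length_filter.symm
  have hlenle : l.length ≤ (ell k - 1) + ell k := by
    have := List.Nodup.length_le_card hnd
    simpa [Fintype.card_sum] using this
  have hellpos : 4 ≤ ell k := le_trans hk (aux_k_le_ell k)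
  -- l is nonempty
  obtain ⟨a, t, rfl⟩ : ∃ a t, l = a :: t := by
    match l, hlen2 with
    | a :: t, _ => exact ⟨a, t, rfl⟩
  have hchl : (a :: t).Chain' (fun x y => ¬(P x = true ∧ P y = true)) :=
    hch2.left_of_append
  by_cases hPa : P a = true
  · -- last vertex is not a v-vertex; work with the reverse
    have hPlast : P ((a :: t).getLast (by simp)) = false := by
      have h3 := (List.isChain_append.mp hch2).2.2
      have := h3 ((a :: t).getLast (by simp))
        (List.getLast?_eq_getLast_of_ne_nil (by simp)) a (by simp)
      simp only [hPa, and_true] at this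
      exact Bool.not_eq_true _ |>.mp (by tauto)
    have hchr : (a :: t).reverse.Chain' (fun x y => ¬(P x = true ∧ P y = true)) := by
      refine List.isChain_reverse.mpr ?_
      exact hchl.imp (by intro x y h; tauto)
    have hhr : ∀ h, (a :: t).reverse.head? = some h → P h = false := by
      intro h hh
      rw [List.head?_reverse] at hh
      rw [List.getLast?_eq_getLast_of_ne_nil (by simp : (a :: t) ≠ [])] at hh
      obtain rfl := Option.some.inj hh
      exact hPlast
    have := lemB P (a :: t).reverse hchr hhr
    rw [List.countP_reverse, List.length_reverse] at this
    omega
  · have hha : ∀ h, (a :: t).head? = some h → P h = false := by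
      intro h hh
      simp only [List.head?_cons, Option.some.injEq] at hh
      subst hh
      exact Bool.not_eq_true _ |>.mp hPa
    have := lemB P (a :: t) hchl hha
    omega
end
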